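/- Fix w_prev ∈ Ω and γ > 0 with λ + γ > 0. Let I = (ξ_1, …, ξ_b) be distributed according to μ^⊗b and let w_I ∈ Ω be the unique minimizer over Ω of w ↦ φ_I(w) + (γ/2)‖w − w_prev‖². Then for every w ∈ Ω, ((λ + γ)/γ)·E_I‖w_I − w‖² ≤ ‖w_prev − w‖² − (2/γ)·E_I[φ(w_I) − φ(w)] + 8L²/(γ(λ + γ)b). -/

import Mathlib

/-!
The proximal objective `F_I = φ_I + (γ/2)‖· - w_prev‖²` is `(λ+γ)`-strongly convex, so at its
minimizer `F_I w ≥ F_I w_I + ((λ+γ)/2)‖w_I - w‖²` on `Ω`. Taking expectations, with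
`E φ_I(w) = φ(w)`, bounds `E‖w_I - w‖²` in terms of `‖w - w_prev‖²` and the expected empirical
risk `E φ_I(w_I)`. What is left is the generalization gap `E[φ(w_I) - φ_I(w_I)]`: for minibatches
differing in one sample the two objectives differ by a `2L/b`-Lipschitz function, so strong
convexity moves the minimizer by at most `2L/((λ+γ)b)`; exchanging that sample with a fresh one
preserves the joint law and turns this stability into the bound `2L²/((λ+γ)b)` on the gap.
-/

open MeasureTheory Filter Function Set Topology

section StrongConvexity

variable {E : Type*} [NormedAddCommGroup E] [InnerProductSpace ℝ E] {s : Set E} {m : ℝ}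
  {f g : E → ℝ} {x y : E}

lemma StrongConvexOn.add_le_of_isMinOn (hf : StrongConvexOn s m f) (hx : x ∈ s)
    (hmin : IsMinOn f s x) (hy : y ∈ s) : f x + m / 2 * ‖y - x‖ ^ 2 ≤ f y := by
  set c := m / 2 * ‖y - x‖ ^ 2
  -- compare `f x` with `f (a • y + (1 - a) • x)` and let `a → 0⁺`
  have hseg : ∀ a ∈ Ioc (0 : ℝ) 1, f x + (1 - a) * c ≤ f y := by
    rintro a ⟨ha₀, ha₁⟩
    have hcomb : f (a • y + (1 - a) • x) ≤ a * f y + (1 - a) * f x - a * (1 - a) * c :=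
      hf.2 hy hx ha₀.le (sub_nonneg.2 ha₁) (add_sub_cancel a 1)
    have hle := isMinOn_iff.1 hmin _ (hf.1 hy hx ha₀.le (sub_nonneg.2 ha₁) (add_sub_cancel a 1))
    refine le_of_mul_le_mul_left ?_ ha₀
    linarith
  have hlim : Tendsto (fun a : ℝ => f x + (1 - a) * c) (𝓝[>] 0) (𝓝 (f x + c)) := by
    have : Continuous fun a : ℝ => f x + (1 - a) * c := by fun_prop
    simpa using this.continuousWithinAt (s := Ioi 0) (x := 0) |>.tendsto
  refine le_of_tendsto hlim ?_
  filter_upwards [Ioc_mem_nhdsGT zero_lt_one] with a ha using hseg a ha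

lemma strongConvexOn_mul_sq_norm_sub (hs : Convex ℝ s) (m : ℝ) (c : E) :
    StrongConvexOn s m fun w => m / 2 * ‖w - c‖ ^ 2 := by
  rw [strongConvexOn_iff_convex]
  have hlin : (fun w => m / 2 * ‖w - c‖ ^ 2 - m / 2 * ‖w‖ ^ 2)
      = fun w => (-m) • innerₛₗ ℝ c w + m / 2 * ‖c‖ ^ 2 := by
    funext w
    simp only [norm_sub_sq_real, innerₛₗ_apply_apply, real_inner_comm, smul_eq_mul]
    ring
  rw [hlin]
  exact (((-m) • innerₛₗ ℝ c).convexOn hs).add_const _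

lemma StrongConvexOn.mul_norm_sub_sq_le_of_isMinOn (hf : StrongConvexOn s m f)
    (hg : StrongConvexOn s m g) (hx : x ∈ s) (hfx : IsMinOn f s x) (hy : y ∈ s)
    (hgy : IsMinOn g s y) {K : ℝ} (hK : f y - g y - (f x - g x) ≤ K * ‖x - y‖) :
    m * ‖x - y‖ ^ 2 ≤ K * ‖x - y‖ := by
  have h₁ := hf.add_le_of_isMinOn hx hfx hy
  have h₂ := hg.add_le_of_isMinOn hy hgy hx
  rw [norm_sub_rev y x] at h₁
  linarith

end StrongConvexity

section Measurability

variable {α : Type*} [MeasurableSpace α] {κ : Measure α}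

theorem MeasureTheory.AEStronglyMeasurable.apply_of_continuousOn {E β : Type*}
    [PseudoMetricSpace E] [NormedAddCommGroup β] {s : Set E} {h : α → E → β}
    (hmeas : ∀ w ∈ s, AEStronglyMeasurable (fun x => h x w) κ)
    (hcont : ∀ x, ContinuousOn (h x) s) {g : α → E} (hg : AEStronglyMeasurable g κ)
    (hgs : ∀ x, g x ∈ s) : AEStronglyMeasurable (fun x => h x (g x)) κ := by
  borelize E
  obtain ⟨g₀, hg₀, hgg₀⟩ := hg
  -- approximate `g₀` by simple functions with values in `s ∩ range g₀`, where `h x` is continuous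
  set t := s ∩ range g₀
  have hg₀t : ∀ᵐ x ∂κ, g₀ x ∈ t := by
    filter_upwards [hgg₀] with x hx using ⟨hx ▸ hgs x, x, rfl⟩
  rcases t.eq_empty_or_nonempty with ht | ⟨y₀, hy₀⟩
  · have : κ = 0 := by
      rw [← ae_eq_bot, ← eventually_false_iff_eq_bot]
      filter_upwards [hg₀t] with x hx using ht.subset hx
    simp [this]
  have : TopologicalSpace.SeparableSpace t :=
    (hg₀.isSeparable_range.mono inter_subset_right).separableSpace
  let G n := SimpleFunc.approxOn g₀ hg₀.measurable t y₀ hy₀ n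
  have hGs : ∀ n x, G n x ∈ s := fun n x => (SimpleFunc.approxOn_mem hg₀.measurable hy₀ n x).1
  have hGmeas : ∀ n, AEStronglyMeasurable (fun x => h x (G n x)) κ := by
    intro n
    have hsum : (fun x => h x (G n x))
        = fun x => ∑ y ∈ (G n).range, ((G n) ⁻¹' {y}).indicator (fun x => h x y) x := by
      funext x
      rw [Finset.sum_eq_single_of_mem (G n x) (SimpleFunc.mem_range_self _ _),
        indicator_of_mem (show x ∈ (G n) ⁻¹' {G n x} from rfl)]
      exact fun y _ hy => indicator_of_notMem (Ne.symm hy) _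
    rw [hsum]
    refine Finset.aestronglyMeasurable_fun_sum _ fun y hy => ?_
    obtain ⟨x, rfl⟩ := SimpleFunc.mem_range.1 hy
    exact (hmeas _ (hGs n x)).indicator ((G n).measurableSet_fiber _)
  refine aestronglyMeasurable_of_tendsto_ae atTop hGmeas ?_
  filter_upwards [hgg₀, hg₀t] with x hx hxt
  rw [hx]
  exact ((hcont x) _ hxt.1).tendsto.comp <| tendsto_nhdsWithin_iff.2
    ⟨SimpleFunc.tendsto_approxOn hg₀.measurable hy₀ (subset_closure hxt),
      Eventually.of_forall fun n => hGs n x⟩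

theorem MeasureTheory.Integrable.apply_of_lipschitzOn {E : Type*} [NormedAddCommGroup E]
    {s : Set E} {h : α → E → ℝ} {L : ℝ}
    (hlip : ∀ x, ∀ w ∈ s, ∀ w' ∈ s, |h x w - h x w'| ≤ L * ‖w - w'‖)
    (hint : ∀ w ∈ s, Integrable (fun x => h x w) κ) {g : α → E} (hg : AEStronglyMeasurable g κ)
    (hgs : ∀ x, g x ∈ s) {c : E} (hc : c ∈ s) (hgc : Integrable (fun x => ‖g x - c‖) κ) :
    Integrable (fun x => h x (g x)) κ := by
  have hcont : ∀ x, ContinuousOn (h x) s := fun x =>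
    (LipschitzOnWith.of_dist_le' fun w hw w' hw' => by
      rw [Real.dist_eq, dist_eq_norm]; exact hlip x w hw w' hw').continuousOn
  refine ((hint c hc).abs.add (hgc.const_mul L)).mono'
    (.apply_of_continuousOn (fun w hw => (hint w hw).1) hcont hg hgs) (.of_forall fun x => ?_)
  have := hlip x _ (hgs x) c hc
  rw [Real.norm_eq_abs, Pi.add_apply]
  linarith [abs_sub_abs_le_abs_sub (h x (g x)) (h x c)]

end Measurability

section EmpiricalRisk

variable {Ξ E : Type*}

/-- The empirical risk `φ_I` of a minibatch `I = (ξ₁, …, ξ_b)`. -/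
noncomputable def empiricalRisk (l : Ξ → E → ℝ) {b : ℕ} (I : Fin b → Ξ) (w : E) : ℝ :=
  (1 / (b : ℝ)) * ∑ j, l (I j) w

lemma empiricalRisk_update_sub {b : ℕ} {l : Ξ → E → ℝ} (I : Fin b → Ξ) (j : Fin b) (ξ : Ξ)
    (w : E) : empiricalRisk l (update I j ξ) w - empiricalRisk l I w = (l ξ w - l (I j) w) / b := by
  simp only [empiricalRisk, ← mul_sub, ← Finset.sum_sub_distrib]
  rw [Finset.sum_eq_single j (fun k _ hk => by rw [update_of_ne hk, sub_self]) (by simp),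
    update_self]
  ring

variable [NormedAddCommGroup E] [InnerProductSpace ℝ E] {s : Set E} {m γ L : ℝ} {b : ℕ}
  {l : Ξ → E → ℝ}

lemma strongConvexOn_empiricalRisk (hb : b ≠ 0) (hl : ∀ ξ, StrongConvexOn s m (l ξ))
    (hs : Convex ℝ s) (I : Fin b → Ξ) : StrongConvexOn s m (empiricalRisk l I) := by
  refine ⟨hs, fun x hx y hy a c ha hc hac => ?_⟩
  have hterm : ∀ j, l (I j) (a • x + c • y)
      ≤ a * l (I j) x + c * l (I j) y - a * c * (m / 2 * ‖x - y‖ ^ 2) := fun j =>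
    (hl (I j)).2 hx hy ha hc hac
  calc empiricalRisk l I (a • x + c • y)
      ≤ (1 / (b : ℝ)) * ∑ j, (a * l (I j) x + c * l (I j) y - a * c * (m / 2 * ‖x - y‖ ^ 2)) :=
        mul_le_mul_of_nonneg_left (Finset.sum_le_sum fun j _ => hterm j) (by positivity)
    _ = a • empiricalRisk l I x + c • empiricalRisk l I y - a * c * (m / 2 * ‖x - y‖ ^ 2) := by
        simp only [empiricalRisk, Finset.sum_sub_distrib, Finset.sum_add_distrib, ← Finset.mul_sum,
          Finset.sum_const, Finset.card_univ, Fintype.card_fin, nsmul_eq_mul, smul_eq_mul]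
        field_simp

lemma strongConvexOn_empiricalRisk_add (hb : b ≠ 0) (hl : ∀ ξ, StrongConvexOn s m (l ξ))
    (hs : Convex ℝ s) (I : Fin b → Ξ) (c : E) :
    StrongConvexOn s (m + γ) fun w => empiricalRisk l I w + γ / 2 * ‖w - c‖ ^ 2 :=
  (strongConvexOn_empiricalRisk hb hl hs I).add (strongConvexOn_mul_sq_norm_sub hs γ c)
    |>.mono fun r => le_of_eq (by simp only [Pi.add_apply]; ring)

lemma add_empiricalRisk_le_of_isMinOn (hb : b ≠ 0) (hl : ∀ ξ, StrongConvexOn s m (l ξ))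
    (hs : Convex ℝ s) (hγ : 0 ≤ γ) {I : Fin b → Ξ} {c x w : E} (hx : x ∈ s)
    (hmin : IsMinOn (fun w => empiricalRisk l I w + γ / 2 * ‖w - c‖ ^ 2) s x) (hw : w ∈ s) :
    (m + γ) / 2 * ‖x - w‖ ^ 2 + empiricalRisk l I x
      ≤ γ / 2 * ‖w - c‖ ^ 2 + empiricalRisk l I w := by
  have h := (strongConvexOn_empiricalRisk_add hb hl hs I c).add_le_of_isMinOn hx hmin hw
  have hxc : 0 ≤ γ / 2 * ‖x - c‖ ^ 2 := by positivity
  rw [norm_sub_rev w x] at h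
  linarith

lemma norm_sub_le_of_isMinOn_update (hb : b ≠ 0) (hl : ∀ ξ, StrongConvexOn s m (l ξ))
    (hlip : ∀ ξ, ∀ w ∈ s, ∀ w' ∈ s, |l ξ w - l ξ w'| ≤ L * ‖w - w'‖) (hL : 0 ≤ L)
    (hs : Convex ℝ s) (hmγ : 0 < m + γ) {c : E} {A : (Fin b → Ξ) → E} (hA : ∀ I, A I ∈ s)
    (hmin : ∀ I, IsMinOn (fun w => empiricalRisk l I w + γ / 2 * ‖w - c‖ ^ 2) s (A I))
    (I : Fin b → Ξ) (j : Fin b) (ξ : Ξ) :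
    ‖A (update I j ξ) - A I‖ ≤ 2 * L / ((m + γ) * b) := by
  have hF := fun J => strongConvexOn_empiricalRisk_add (γ := γ) hb hl hs J c
  have hb₀ : (0 : ℝ) < b := Nat.cast_pos.2 (Nat.pos_of_ne_zero hb)
  set d := ‖A (update I j ξ) - A I‖
  -- the two objectives differ by `(l ξ - l (I j)) / b`, which is `2L/b`-Lipschitz on `s`
  have hsq : (m + γ) * d ^ 2 ≤ 2 * L / b * d := by
    refine (hF _).mul_norm_sub_sq_le_of_isMinOn (hF I) (hA _) (hmin _) (hA I) (hmin I) ?_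
    have h₁ := (le_abs_self _).trans (hlip ξ _ (hA I) _ (hA (update I j ξ)))
    have h₂ := (le_abs_self _).trans (hlip (I j) _ (hA (update I j ξ)) _ (hA I))
    rw [norm_sub_rev] at h₁
    calc _ = ((l ξ (A I) - l ξ (A (update I j ξ)))
            + (l (I j) (A (update I j ξ)) - l (I j) (A I))) / b := by
          rw [← sub_add_sub_comm, add_sub_add_comm, empiricalRisk_update_sub,
            empiricalRisk_update_sub]
          ring
      _ ≤ (L * d + L * d) / b := by gcongr
      _ = 2 * L / b * d := by ring
  rcases (show 0 ≤ d from norm_nonneg _).eq_or_lt with hd | hd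
  · rw [← hd]; positivity
  · rw [le_div_iff₀ (by positivity)]
    rw [div_mul_eq_mul_div, le_div_iff₀ hb₀] at hsq
    nlinarith

end EmpiricalRisk

section Minibatch

variable {Ξ : Type*} [MeasurableSpace Ξ] (μ : Measure Ξ) {b : ℕ}

theorem measurePreserving_update_eval [SigmaFinite μ] (j : Fin b) :
    MeasurePreserving (fun p : (Fin b → Ξ) × Ξ => (update p.1 j p.2, p.1 j))
      ((Measure.pi fun _ => μ).prod μ) ((Measure.pi fun _ => μ).prod μ) := by
  -- view `(I, ξ)` as the `(b+1)`-tuple `Fin.snoc I ξ` and swap its entries `j` and `b`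
  let e : (Fin b → Ξ) × Ξ ≃ᵐ (Fin (b + 1) → Ξ) :=
    MeasurableEquiv.prodComm.trans (MeasurableEquiv.piFinSuccAbove (fun _ => Ξ) (Fin.last b)).symm
  have he : MeasurePreserving e ((Measure.pi fun _ => μ).prod μ) (Measure.pi fun _ => μ) :=
    (measurePreserving_piFinSuccAbove (fun _ => μ) (Fin.last b)).symm.comp
      Measure.measurePreserving_swap
  let σ := MeasurableEquiv.piCongrLeft (fun _ => Ξ) (Equiv.swap (Fin.castSucc j) (Fin.last b))
  have hσ : MeasurePreserving σ (Measure.pi fun _ => μ) (Measure.pi fun _ => μ) :=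
    measurePreserving_piCongrLeft (fun _ => μ) _
  convert he.symm.comp (hσ.comp he) using 1
  funext p
  apply e.injective
  simp only [comp_apply, MeasurableEquiv.apply_symm_apply]
  funext i
  refine Fin.lastCases ?_ (fun k => ?_) i
  · simp [e, σ, MeasurableEquiv.prodComm, MeasurableEquiv.coe_piCongrLeft,
      Equiv.piCongrLeft_apply_eq_cast]
  · rcases eq_or_ne k j with rfl | hk
    · simp [e, σ, MeasurableEquiv.prodComm, MeasurableEquiv.coe_piCongrLeft,
        Equiv.piCongrLeft_apply_eq_cast]
    · simp [e, σ, MeasurableEquiv.prodComm, MeasurableEquiv.coe_piCongrLeft,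
        Equiv.piCongrLeft_apply_eq_cast, Equiv.swap_apply_of_ne_of_ne, hk]

variable [IsProbabilityMeasure μ] {E : Type*} {l : Ξ → E → ℝ}

lemma integral_empiricalRisk (hb : b ≠ 0) {w : E} (hw : Integrable (fun ξ => l ξ w) μ) :
    ∫ I, empiricalRisk l I w ∂(Measure.pi fun _ : Fin b => μ) = ∫ ξ, l ξ w ∂μ := by
  have heval : ∀ j : Fin b, ∫ I, l (I j) w ∂(Measure.pi fun _ => μ) = ∫ ξ, l ξ w ∂μ := by
    intro j
    have hj := measurePreserving_eval (fun _ => μ) j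
    conv_rhs => rw [← hj.map_eq]
    exact (integral_map hj.measurable.aemeasurable (by rw [hj.map_eq]; exact hw.1)).symm
  have hint : ∀ j : Fin b, Integrable (fun I => l (I j) w) (Measure.pi fun _ => μ) := fun j =>
    (measurePreserving_eval (fun _ => μ) j).integrable_comp_of_integrable hw
  simp only [empiricalRisk]
  rw [integral_const_mul, integral_finsetSum _ fun j _ => hint j]
  simp only [heval, Finset.sum_const, Finset.card_univ, Fintype.card_fin, nsmul_eq_mul]
  field_simp

variable [NormedAddCommGroup E] {s : Set E} {L : ℝ} {A : (Fin b → Ξ) → E}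

section Integrability

variable (hlip : ∀ ξ, ∀ w ∈ s, ∀ w' ∈ s, |l ξ w - l ξ w'| ≤ L * ‖w - w'‖)
  (hint : ∀ w ∈ s, Integrable (fun ξ => l ξ w) μ) (hA : ∀ I, A I ∈ s)
  (hAm : AEStronglyMeasurable A (Measure.pi fun _ => μ)) {c : E} (hc : c ∈ s)
  (hAc : Integrable (fun I => ‖A I - c‖) (Measure.pi fun _ => μ))
include hlip hint hA hAm hc hAc

lemma integrable_apply_eval (j : Fin b) :
    Integrable (fun I => l (I j) (A I)) (Measure.pi fun _ => μ) := by
  refine Integrable.apply_of_lipschitzOn (fun I => hlip (I j)) (fun w hw => ?_) hAm hA hc hAc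
  exact (measurePreserving_eval (fun _ => μ) j).integrable_comp_of_integrable (hint w hw)

lemma integrable_apply_fst :
    Integrable (fun p : (Fin b → Ξ) × Ξ => l p.2 (A p.1)) ((Measure.pi fun _ => μ).prod μ) :=
  Integrable.apply_of_lipschitzOn (fun p => hlip p.2) (fun w hw => (hint w hw).comp_snd _)
    (hAm.comp_quasiMeasurePreserving Measure.quasiMeasurePreserving_fst) (fun p => hA p.1) hc
    (hAc.comp_fst μ)

lemma integrable_empiricalRisk :
    Integrable (fun I => empiricalRisk l I (A I)) (Measure.pi fun _ => μ) :=
  (integrable_finsetSum _ fun j _ => integrable_apply_eval μ hlip hint hA hAm hc hAc j).const_mul _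

end Integrability

lemma integral_integral_sub_integral_apply_eval_le (hL : 0 ≤ L)
    (hlip : ∀ ξ, ∀ w ∈ s, ∀ w' ∈ s, |l ξ w - l ξ w'| ≤ L * ‖w - w'‖) (hA : ∀ I, A I ∈ s)
    {β : ℝ} {j : Fin b} (hβ : ∀ I ξ, ‖A (update I j ξ) - A I‖ ≤ β)
    (hu : Integrable (fun p : (Fin b → Ξ) × Ξ => l p.2 (A p.1)) ((Measure.pi fun _ => μ).prod μ))
    (hv : Integrable (fun I => l (I j) (A I)) (Measure.pi fun _ => μ)) :
    ∫ I, ∫ ξ, l ξ (A I) ∂μ ∂(Measure.pi fun _ => μ)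
      - ∫ I, l (I j) (A I) ∂(Measure.pi fun _ => μ) ≤ L * β := by
  have hfst : ∫ I, l (I j) (A I) ∂(Measure.pi fun _ => μ)
      = ∫ p, l (p.1 j) (A p.1) ∂((Measure.pi fun _ => μ).prod μ) := by
    rw [integral_fun_fst (fun I => l (I j) (A I))]
    simp
  have hT := measurePreserving_update_eval μ j
  set ν := (Measure.pi fun _ : Fin b => μ).prod μ
  have hswap : ∫ p, l p.2 (A p.1) ∂ν = ∫ p, l (p.1 j) (A (update p.1 j p.2)) ∂ν := by
    conv_lhs => rw [← hT.map_eq]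
    exact integral_map hT.measurable.aemeasurable (by rw [hT.map_eq]; exact hu.1)
  have hu' : Integrable (fun p => l (p.1 j) (A (update p.1 j p.2))) ν :=
    (hT.integrable_comp hu.1).2 hu
  rw [← integral_prod _ hu, hswap, hfst, ← integral_sub hu' (hv.comp_fst μ)]
  calc _ ≤ ∫ _, L * β ∂ν := by
        refine integral_mono (hu'.sub (hv.comp_fst μ)) (integrable_const _) fun p => ?_
        calc _ ≤ L * ‖A (update p.1 j p.2) - A p.1‖ :=
              (le_abs_self _).trans (hlip _ _ (hA _) _ (hA _))
          _ ≤ L * β := mul_le_mul_of_nonneg_left (hβ _ _) hL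
    _ = L * β := by simp

theorem integral_integral_sub_integral_empiricalRisk_le (hb : b ≠ 0) (hL : 0 ≤ L)
    (hlip : ∀ ξ, ∀ w ∈ s, ∀ w' ∈ s, |l ξ w - l ξ w'| ≤ L * ‖w - w'‖)
    (hint : ∀ w ∈ s, Integrable (fun ξ => l ξ w) μ) (hA : ∀ I, A I ∈ s)
    (hAm : AEStronglyMeasurable A (Measure.pi fun _ => μ)) {c : E} (hc : c ∈ s)
    (hAc : Integrable (fun I => ‖A I - c‖) (Measure.pi fun _ => μ)) {β : ℝ}
    (hβ : ∀ I j ξ, ‖A (update I j ξ) - A I‖ ≤ β) :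
    ∫ I, ∫ ξ, l ξ (A I) ∂μ ∂(Measure.pi fun _ => μ)
      - ∫ I, empiricalRisk l I (A I) ∂(Measure.pi fun _ => μ) ≤ L * β := by
  have hv := integrable_apply_eval μ hlip hint hA hAm hc hAc
  have hj := fun j => integral_integral_sub_integral_apply_eval_le μ hL hlip hA (hβ · j)
    (integrable_apply_fst μ hlip hint hA hAm hc hAc) (hv j)
  simp only [empiricalRisk]
  rw [integral_const_mul, integral_finsetSum _ fun j _ => hv j]
  calc _ = (1 / (b : ℝ)) * ∑ j : Fin b, (∫ I, ∫ ξ, l ξ (A I) ∂μ ∂(Measure.pi fun _ => μ)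
        - ∫ I, l (I j) (A I) ∂(Measure.pi fun _ => μ)) := by
        rw [Finset.sum_sub_distrib, Finset.sum_const, Finset.card_univ, Fintype.card_fin,
          nsmul_eq_mul]
        field_simp
    _ ≤ (1 / (b : ℝ)) * ∑ _j : Fin b, L * β := by gcongr with j; exact hj j
    _ = L * β := by
        rw [Finset.sum_const, Finset.card_univ, Fintype.card_fin, nsmul_eq_mul]
        field_simp

theorem integral_add_integral_empiricalRisk_le [InnerProductSpace ℝ E] {m γ : ℝ} (hb : b ≠ 0)
    (hl : ∀ ξ, StrongConvexOn s m (l ξ)) (hs : Convex ℝ s) (hγ : 0 ≤ γ)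
    (hlip : ∀ ξ, ∀ w ∈ s, ∀ w' ∈ s, |l ξ w - l ξ w'| ≤ L * ‖w - w'‖)
    (hint : ∀ w ∈ s, Integrable (fun ξ => l ξ w) μ) (hA : ∀ I, A I ∈ s)
    (hAm : AEStronglyMeasurable A (Measure.pi fun _ => μ)) {c : E} (hc : c ∈ s)
    (hAc : Integrable (fun I => ‖A I - c‖) (Measure.pi fun _ => μ))
    (hmin : ∀ I, IsMinOn (fun w => empiricalRisk l I w + γ / 2 * ‖w - c‖ ^ 2) s (A I))
    {w : E} (hw : w ∈ s) (hAw : Integrable (fun I => ‖A I - w‖ ^ 2) (Measure.pi fun _ => μ)) :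
    (m + γ) / 2 * ∫ I, ‖A I - w‖ ^ 2 ∂(Measure.pi fun _ => μ)
        + ∫ I, empiricalRisk l I (A I) ∂(Measure.pi fun _ => μ)
      ≤ γ / 2 * ‖w - c‖ ^ 2 + ∫ ξ, l ξ w ∂μ := by
  have hR := integrable_empiricalRisk μ hlip hint hA hAm hc hAc
  have hRw : Integrable (fun I => empiricalRisk l I w) (Measure.pi fun _ : Fin b => μ) :=
    integrable_empiricalRisk μ hlip hint (fun _ => hw) aestronglyMeasurable_const hw
      (integrable_const _)
  calc _ = ∫ I, ((m + γ) / 2 * ‖A I - w‖ ^ 2 + empiricalRisk l I (A I))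
        ∂(Measure.pi fun _ => μ) := by
        rw [integral_add (hAw.const_mul _) hR, integral_const_mul]
    _ ≤ ∫ I, (γ / 2 * ‖w - c‖ ^ 2 + empiricalRisk l I w) ∂(Measure.pi fun _ => μ) :=
        integral_mono ((hAw.const_mul _).add hR) ((integrable_const _).add hRw) fun I =>
          add_empiricalRisk_le_of_isMinOn hb hl hs hγ (hA I) (hmin I) hw
    _ = _ := by
        rw [integral_add (integrable_const _) hRw, integral_const,
          integral_empiricalRisk μ hb (hint w hw)]
        simp

end Minibatch

theorem stmt_5_general {E : Type*} [NormedAddCommGroup E] [InnerProductSpace ℝ E]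
    {Ω : Set E} (hconv : Convex ℝ Ω)
    {Ξ : Type*} [MeasurableSpace Ξ] (μ : Measure Ξ) [IsProbabilityMeasure μ]
    (l : Ξ → E → ℝ) {lam L : ℝ} (hL : 0 < L)
    (hscl : ∀ ξ, StrongConvexOn Ω lam (l ξ))
    (hlip : ∀ ξ, ∀ w ∈ Ω, ∀ w' ∈ Ω, |l ξ w - l ξ w'| ≤ L * ‖w - w'‖)
    (φ : E → ℝ) (hφ : ∀ w, φ w = ∫ ξ, l ξ w ∂μ)
    (hφint : ∀ w ∈ Ω, Integrable (fun ξ => l ξ w) μ)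
    (wprev : E) (hwprev : wprev ∈ Ω) {γ : ℝ} (hγ : 0 < γ) (hlg : 0 < lam + γ)
    {b : ℕ} (hb : 1 ≤ b)
    (P : Measure (Fin b → Ξ)) (hP : P = Measure.pi fun _ : Fin b => μ)
    (wI : (Fin b → Ξ) → E) (hmem : ∀ I, wI I ∈ Ω)
    (hmin : ∀ I, IsMinOn
      (fun w => (1 / (b : ℝ)) * ∑ j, l (I j) w + γ / 2 * ‖w - wprev‖ ^ 2) Ω (wI I))
    (hmeas : AEStronglyMeasurable wI P)
    (hint1 : ∀ w : E, Integrable (fun I => ‖wI I - w‖ ^ 2) P)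
    (hint2 : Integrable (fun I => φ (wI I)) P) :
    ∀ w ∈ Ω,
      (lam + γ) / γ * ∫ I, ‖wI I - w‖ ^ 2 ∂P ≤
        ‖wprev - w‖ ^ 2 - 2 / γ * ∫ I, (φ (wI I) - φ w) ∂P +
          8 * L ^ 2 / (γ * (lam + γ) * b) := by
  intro w hw
  subst hP
  have hb₀ : b ≠ 0 := Nat.one_le_iff_ne_zero.1 hb
  have hAc : Integrable (fun I => ‖wI I - wprev‖) (Measure.pi fun _ => μ) :=
    ((memLp_two_iff_integrable_sq_norm (hmeas.sub aestronglyMeasurable_const)).2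
      (hint1 wprev)).integrable one_le_two |>.norm
  have hgap := integral_integral_sub_integral_empiricalRisk_le μ hb₀ hL.le hlip hφint hmem hmeas
    hwprev hAc (norm_sub_le_of_isMinOn_update hb₀ hscl hlip hL.le hconv hlg hmem hmin)
  have hdesc := integral_add_integral_empiricalRisk_le μ hb₀ hscl hconv hγ.le hlip hφint hmem
    hmeas hwprev hAc hmin hw (hint1 w)
  simp only [← hφ] at hgap hdesc
  rw [integral_sub hint2 (integrable_const _), integral_const, norm_sub_rev wprev w]
  simp only [probReal_univ, one_smul]
  set S := ∫ I, ‖wI I - w‖ ^ 2 ∂(Measure.pi fun _ => μ)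
  set K := L ^ 2 / ((lam + γ) * b) with hK_def
  have hK : 0 ≤ K := by positivity
  have hLK : L * (2 * L / ((lam + γ) * b)) = 2 * K := by ring
  calc (lam + γ) / γ * S = (lam + γ) * S / γ := by ring
    _ ≤ (γ * ‖w - wprev‖ ^ 2 - 2 * (∫ I, φ (wI I) ∂(Measure.pi fun _ => μ) - φ w) + 8 * K) / γ := by
        gcongr
        linarith
    _ = _ := by
        rw [hK_def]
        field_simp

/-- One step of exact minibatch-prox: with `w_I` the minimizer over `Ω` of
`w ↦ φ_I(w) + (γ/2)‖w - w_prev‖²` for a minibatch `I ∼ μ^⊗b`, for every `w ∈ Ω`,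
`((λ+γ)/γ)·E_I‖w_I - w‖² ≤ ‖w_prev - w‖² - (2/γ)·E_I[φ(w_I) - φ(w)] + 8L²/(γ(λ+γ)b)`. -/
theorem stmt_5 {E : Type*} [NormedAddCommGroup E] [InnerProductSpace ℝ E]
    {Ω : Set E} (hne : Ω.Nonempty) (hcl : IsClosed Ω) (hconv : Convex ℝ Ω)
    {Ξ : Type*} [MeasurableSpace Ξ] (μ : Measure Ξ) [IsProbabilityMeasure μ]
    (l : Ξ → E → ℝ) {lam L : ℝ} (hlam : 0 ≤ lam) (hL : 0 < L)
    (hconvl : ∀ ξ, ConvexOn ℝ Ω (l ξ))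
    (hscl : ∀ ξ, StrongConvexOn Ω lam (l ξ))
    (hlip : ∀ ξ, ∀ w ∈ Ω, ∀ w' ∈ Ω, |l ξ w - l ξ w'| ≤ L * ‖w - w'‖)
    (φ : E → ℝ) (hφ : ∀ w, φ w = ∫ ξ, l ξ w ∂μ)
    (hφint : ∀ w ∈ Ω, Integrable (fun ξ => l ξ w) μ)
    (wprev : E) (hwprev : wprev ∈ Ω) {γ : ℝ} (hγ : 0 < γ) (hlg : 0 < lam + γ)
    {b : ℕ} (hb : 1 ≤ b)
    (P : Measure (Fin b → Ξ)) (hP : P = Measure.pi fun _ : Fin b => μ)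
    (wI : (Fin b → Ξ) → E) (hmem : ∀ I, wI I ∈ Ω)
    (hmin : ∀ I, IsMinOn
      (fun w => (1 / (b : ℝ)) * ∑ j, l (I j) w + γ / 2 * ‖w - wprev‖ ^ 2) Ω (wI I))
    (hmeas : AEStronglyMeasurable wI P)
    (hint1 : ∀ w : E, Integrable (fun I => ‖wI I - w‖ ^ 2) P)
    (hint2 : Integrable (fun I => φ (wI I)) P) :
    ∀ w ∈ Ω,
      (lam + γ) / γ * ∫ I, ‖wI I - w‖ ^ 2 ∂P ≤
        ‖wprev - w‖ ^ 2 - 2 / γ * ∫ I, (φ (wI I) - φ w) ∂P +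
          8 * L ^ 2 / (γ * (lam + γ) * b) :=
  stmt_5_general hconv μ l hL hscl hlip φ hφ hφint wprev hwprev hγ hlg hb P hP wI hmem hmin hmeas
    hint1 hint2
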